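/- Suppose F is a Kripke frame that is a finite linear order with n elements and least element w₀, and N is a Kripke model with reflexive and transitive accessibility relation. If u₀ is a world in N that admits a ratchet of length n, then there exists a frame labeling of F for (N,u₀). -/
import Mathlib


namespace GrzPaper

/-- Propositional modal formulas, built from variables, falsum, implication and box. -/
inductive Formula : Type
  | var : ℕ → Formula
  | fls : Formula
  | impl : Formula → Formula → Formula
  | box : Formula → Formula
deriving DecidableEq

namespace Formula

def neg (φ : Formula) : Formula := impl φ fls
def tru : Formula := neg fls
def disj (φ ψ : Formula) : Formula := impl (neg φ) ψ
def conj (φ ψ : Formula) : Formula := neg (impl φ (neg ψ))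
def dia (φ : Formula) : Formula := neg (box (neg φ))

/-- Uniform substitution. -/
def subst (σ : ℕ → Formula) : Formula → Formula
  | var n => σ n
  | fls => fls
  | impl a b => impl (subst σ a) (subst σ b)
  | box a => box (subst σ a)

/-- Propositional (Boolean) evaluation, treating variables and boxed formulas as atoms. -/
def evalProp (v : Formula → Bool) : Formula → Bool
  | var n => v (var n)
  | fls => false
  | impl a b => !(evalProp v a) || evalProp v b
  | box a => v (box a)

/-- A propositional tautology: true under every Boolean valuation of the atoms
(variables and boxed subformulas). -/
def Tautology (φ : Formula) : Prop := ∀ v, evalProp v φ = true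

end Formula

open Formula

/-- A normal modal logic: contains all propositional tautologies and all instances of K,
closed under modus ponens, necessitation and uniform substitution. -/
structure IsNormalLogic (L : Set Formula) : Prop where
  taut : ∀ φ, Tautology φ → φ ∈ L
  axK : ∀ φ ψ, impl (box (impl φ ψ)) (impl (box φ) (box ψ)) ∈ L
  mp : ∀ φ ψ, impl φ ψ ∈ L → φ ∈ L → ψ ∈ L
  nec : ∀ φ, φ ∈ L → box φ ∈ L
  subst : ∀ φ σ, φ ∈ L → φ.subst σ ∈ L

/-- The normal modal logic generated by a set of axioms: the smallest normal modal
logic containing them. -/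
def Generated (Ax : Set Formula) : Set Formula :=
  ⋂₀ {L | IsNormalLogic L ∧ Ax ⊆ L}

def pv : Formula := var 0
def qv : Formula := var 1

def axT : Formula := impl (box pv) pv
def axFour : Formula := impl (box pv) (box (box pv))
def axGrz : Formula := impl (box (impl (box (impl pv (box pv))) pv)) pv
def axPoint2 : Formula := impl (dia (box pv)) (box (dia pv))
def axPoint3 : Formula := disj (box (impl (box pv) qv)) (box (impl (box qv) pv))

/-- penultimate(φ) : φ ∧ ◇¬φ ∧ □(¬φ → □¬φ). -/
def penultimate (φ : Formula) : Formula :=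
  conj φ (conj (dia (neg φ)) (box (impl (neg φ) (box (neg φ)))))

/-- contingent(φ) : ◇φ ∧ ◇¬φ. -/
def contingent (φ : Formula) : Formula := conj (dia φ) (dia (neg φ))

/-- The axiom Grz* : contingent(p) → ◇(penultimate(p) ∨ penultimate(¬p)). -/
def axGrzStar : Formula :=
  impl (contingent pv) (dia (disj (penultimate pv) (penultimate (neg pv))))

def Grz : Set Formula := Generated {axGrz}
def GrzStarLogic : Set Formula := Generated {axGrzStar}
def S4GrzStar : Set Formula := Generated {axT, axFour, axGrzStar}
def Grz2 : Set Formula := Generated {axGrz, axPoint2}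
def Grz3 : Set Formula := Generated {axGrz, axPoint3}
def KLogic : Set Formula := Generated ∅

/-- A Kripke model: an accessibility relation together with a valuation. -/
structure KripkeModel (W : Type) where
  rel : W → W → Prop
  val : ℕ → W → Prop

/-- Satisfaction of a modal formula at a world of a Kripke model. -/
def Satisfies {W : Type} (M : KripkeModel W) : W → Formula → Prop
  | w, .var n => M.val n w
  | _, .fls => False
  | w, .impl a b => Satisfies M w a → Satisfies M w b
  | w, .box a => ∀ v, M.rel w v → Satisfies M v a

/-- Validity of a formula on a Kripke frame. -/
def ValidOnFrame (W : Type) (R : W → W → Prop) (φ : Formula) : Prop :=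
  ∀ (val : ℕ → W → Prop) (w : W), Satisfies ⟨R, val⟩ w φ

/-- A model labeling of (M,w₀) for (N,u₀): a substitution σ such that every formula is
true at (M,w₀) iff its σ-instance is true at (N,u₀). -/
def ModelLabeling {W U : Type} (M : KripkeModel W) (w0 : W) (N : KripkeModel U) (u0 : U)
    (σ : ℕ → Formula) : Prop :=
  ∀ φ : Formula, Satisfies M w0 φ ↔ Satisfies N u0 (φ.subst σ)

/-- A frame labeling of the frame (W,R) with initial node w₀ for the pointed model (N,u₀). -/
def FrameLabeling {W U : Type} (R : W → W → Prop) (w0 : W) (N : KripkeModel U) (u0 : U)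
    (Φ : W → Formula) : Prop :=
  Satisfies N u0 (Φ w0) ∧
  (∀ u, N.rel u0 u → ∀ w, Satisfies N u (Φ w) →
    ∀ w', (Satisfies N u (dia (Φ w')) ↔ R w w')) ∧
  (∀ u, N.rel u0 u → ∃! w, Satisfies N u (Φ w))

def bigOr : List Formula → Formula
  | [] => fls
  | φ :: l => disj φ (bigOr l)

def bigAnd : List Formula → Formula
  | [] => tru
  | φ :: l => conj φ (bigAnd l)

open Classical in
/-- The disjunction ⋁ {Φ w : P w}. -/
noncomputable def labelFormula {W : Type} [Fintype W] (Φ : W → Formula) (P : W → Prop) :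
    Formula :=
  bigOr ((Finset.univ.filter P).toList.map Φ)

/-- Θ_A : the formula asserting that the button pattern is exactly A. -/
noncomputable def Theta {n : ℕ} (b : Fin n → Formula) (A : Finset (Fin n)) : Formula :=
  bigAnd ((Finset.univ : Finset (Fin n)).toList.map
    (fun i => if i ∈ A then box (b i) else neg (box (b i))))

/-- b₀,…,b_{n−1} are independent buttons at u₀: none is pushed (necessary) at u₀, and
necessarily, whenever the button pattern is exactly A, every larger pattern is possible. -/
def IndependentButtons {U : Type} (N : KripkeModel U) (u0 : U) {n : ℕ}
    (b : Fin n → Formula) : Prop :=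
  (∀ i, ¬ Satisfies N u0 (box (b i))) ∧
  ∀ A : Finset (Fin n), ∀ u, N.rel u0 u → Satisfies N u (Theta b A) →
    ∀ A' : Finset (Fin n), A ⊆ A' → Satisfies N u (dia (Theta b A'))

/-- r₀,…,r_{n−1} form a ratchet of length n at u₀. -/
def Ratchet {U : Type} (N : KripkeModel U) (u0 : U) {n : ℕ} (r : Fin n → Formula) : Prop :=
  (∀ i : Fin n, (i.val = 0 → Satisfies N u0 (box (r i))) ∧
      (0 < i.val → ¬ Satisfies N u0 (box (r i)))) ∧
  (∀ u, N.rel u0 u → ∀ i j : Fin n, i < j →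
      Satisfies N u (box (r j)) → Satisfies N u (box (r i))) ∧
  (∀ u, N.rel u0 u → ∀ i : Fin n, 0 < i.val →
      (∀ j : Fin n, Satisfies N u (box (r j)) ↔ j < i) →
        ∃ v, N.rel u v ∧ ∀ j : Fin n, Satisfies N v (box (r j)) ↔ j ≤ i)

/-- A (finite) tree order: a partial order with a least element in which the set of
predecessors of every element is linearly ordered. -/
def IsTreeOrder {W : Type} (R : W → W → Prop) : Prop :=
  IsPartialOrder W R ∧ (∃ r, ∀ x, R r x) ∧ ∀ x a b, R a x → R b x → R a b ∨ R b a

/-- A baled tree order: a partial order with a greatest element t whose removal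
leaves a tree. -/
def IsBaledTreeOrder {W : Type} (R : W → W → Prop) : Prop :=
  IsPartialOrder W R ∧ ∃ t : W, (∀ x, R x t) ∧
    (∃ r, r ≠ t ∧ ∀ x, x ≠ t → R r x) ∧
    (∀ x a b, x ≠ t → R a x → R b x → R a b ∨ R b a)

/-- Height of a node: the number of its strict predecessors. -/
noncomputable def heightOf {W : Type} (R : W → W → Prop) (x : W) : ℕ :=
  Nat.card {y : W // R y x ∧ y ≠ x}

/-- y is an immediate successor of x. -/
def ImmSucc {W : Type} (R : W → W → Prop) (x y : W) : Prop :=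
  R x y ∧ x ≠ y ∧ ∀ z, R x z → R z y → z = x ∨ z = y

def IsMaximal {W : Type} (R : W → W → Prop) (x : W) : Prop := ∀ z, R x z → z = x

/-- A regular finite tree: all maximal elements have the same height, and any two
elements of the same height have the same number of immediate successors. -/
def IsRegularTree {W : Type} (R : W → W → Prop) : Prop :=
  IsTreeOrder R ∧
  (∀ x y, IsMaximal R x → IsMaximal R y → heightOf R x = heightOf R y) ∧
  (∀ x y, heightOf R x = heightOf R y →
    Nat.card {z : W // ImmSucc R x z} = Nat.card {z : W // ImmSucc R y z})


lemma sat_conj {U : Type} (N : KripkeModel U) (u : U) (φ ψ : Formula) :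
    Satisfies N u (conj φ ψ) ↔ Satisfies N u φ ∧ Satisfies N u ψ := by
  simp only [Formula.conj, Formula.neg, Satisfies]
  tauto

lemma sat_bigAnd {U : Type} (N : KripkeModel U) (u : U) (l : List Formula) :
    Satisfies N u (bigAnd l) ↔ ∀ φ ∈ l, Satisfies N u φ := by
  induction l with
  | nil => simp [bigAnd, tru, Formula.neg, Satisfies]
  | cons φ l ih => simp [bigAnd, sat_conj, ih]

lemma sat_dia {U : Type} (N : KripkeModel U) (u : U) (φ : Formula) :
    Satisfies N u (dia φ) ↔ ∃ v, N.rel u v ∧ Satisfies N v φ := by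
  simp only [Formula.dia, Formula.neg, Satisfies]
  constructor
  · intro h
    by_contra hc
    push_neg at hc
    exact h fun v hv hs => hc v hv hs
  · rintro ⟨v, hv, hs⟩ h
    exact h v hv hs

lemma sat_Theta {U : Type} (N : KripkeModel U) (u : U) {n : ℕ} (r : Fin n → Formula)
    (A : Finset (Fin n)) :
    Satisfies N u (Theta r A) ↔ ∀ j, (Satisfies N u (Formula.box (r j)) ↔ j ∈ A) := by
  rw [Theta, sat_bigAnd]
  constructor
  · intro h j
    have hj := h _ (List.mem_map.mpr ⟨j, by simp, rfl⟩)
    by_cases hA : j ∈ A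
    · simp only [if_pos hA] at hj
      simp [hA, hj]
    · simp only [if_neg hA, Formula.neg, Satisfies] at hj
      simp [hA]
      intro hb
      exact hj hb
  · intro h φ hφ
    obtain ⟨j, -, rfl⟩ := List.mem_map.mp hφ
    by_cases hA : j ∈ A
    · simp only [if_pos hA]
      exact (h j).mpr hA
    · simp only [if_neg hA, Formula.neg, Satisfies]
      intro hb
      exact hA ((h j).mp hb)

/-- If F is a finite linear order with n elements and least element w₀, and
u₀ admits a ratchet of length n in a reflexive transitive model N, then there is a frame
labeling of F for (N,u₀). -/
theorem statement14 {W U : Type} [Fintype W] [LinearOrder W] {n : ℕ}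
    (hn : Fintype.card W = n) (w0 : W) (hw0 : ∀ x, w0 ≤ x)
    (N : KripkeModel U) (hrefl : Reflexive N.rel) (htrans : Transitive N.rel) (u0 : U)
    (r : Fin n → Formula) (hr : Ratchet N u0 r) :
    ∃ Φ : W → Formula, FrameLabeling (· ≤ ·) w0 N u0 Φ := by
  classical
  have hpos : 0 < n := hn ▸ Fintype.card_pos_iff.mpr ⟨w0⟩
  let e : W ≃o Fin n := (monoEquivOfFin W hn).symm
  -- persistence of boxes
  have hpers : ∀ u v, N.rel u v → ∀ j : Fin n,
      Satisfies N u (Formula.box (r j)) → Satisfies N v (Formula.box (r j)) := by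
    intro u v huv j h w hvw
    exact h w (htrans huv hvw)
  have z0 : Fin n := ⟨0, hpos⟩
  have hbox0 : Satisfies N u0 (Formula.box (r ⟨0, hpos⟩)) := (hr.1 ⟨0, hpos⟩).1 rfl
  -- at every accessible world, the pattern of pushed buttons is an initial segment Iic m
  have hpat : ∀ u, N.rel u0 u → ∃ m : Fin n,
      ∀ j : Fin n, Satisfies N u (Formula.box (r j)) ↔ j ≤ m := by
    intro u hu
    set A : Finset (Fin n) :=
      Finset.univ.filter (fun j => Satisfies N u (Formula.box (r j))) with hA
    have h0A : (⟨0, hpos⟩ : Fin n) ∈ A := by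
      simp only [hA, Finset.mem_filter, Finset.mem_univ, true_and]
      exact hpers u0 u hu _ hbox0
    have hne : A.Nonempty := ⟨_, h0A⟩
    refine ⟨A.max' hne, fun j => ?_⟩
    constructor
    · intro hj
      exact A.le_max' j (by simp [hA, hj])
    · intro hj
      have hmA : A.max' hne ∈ A := A.max'_mem hne
      have hmax : Satisfies N u (Formula.box (r (A.max' hne))) := by
        simpa [hA] using hmA
      rcases lt_or_eq_of_le hj with hlt | heq
      · exact hr.2.1 u hu j _ hlt hmax
      · subst heq; exact hmax
  -- reachability: from pattern Iic m we can reach pattern Iic k for any k ≥ m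
  have hreach : ∀ (kv : ℕ) (hk : kv < n), ∀ u, N.rel u0 u → ∀ m : Fin n, m.val ≤ kv →
      (∀ j : Fin n, Satisfies N u (Formula.box (r j)) ↔ j ≤ m) →
      ∃ v, N.rel u v ∧ ∀ j : Fin n, Satisfies N v (Formula.box (r j)) ↔ j ≤ ⟨kv, hk⟩ := by
    intro kv
    induction kv with
    | zero =>
      intro hk u hu m hm hp
      have : m = ⟨0, hk⟩ := Fin.ext (Nat.le_zero.mp hm)
      exact ⟨u, hrefl u, this ▸ hp⟩
    | succ kv ih =>
      intro hk u hu m hm hp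
      by_cases hcase : m.val = kv + 1
      · have : m = ⟨kv + 1, hk⟩ := Fin.ext hcase
        exact ⟨u, hrefl u, this ▸ hp⟩
      · have hm' : m.val ≤ kv := Nat.lt_succ_iff.mp (lt_of_le_of_ne hm hcase)
        obtain ⟨v, huv, hv⟩ := ih (lt_trans (Nat.lt_succ_self kv) hk) u hu m hm' hp
        have hvpat : ∀ j : Fin n, Satisfies N v (Formula.box (r j)) ↔ j < ⟨kv + 1, hk⟩ := by
          intro j
          rw [hv j]
          simp [Fin.le_def, Fin.lt_def, Nat.lt_succ_iff]
        obtain ⟨w', hvw, hw⟩ := hr.2.2 v (htrans hu huv) ⟨kv + 1, hk⟩ (Nat.succ_pos kv) hvpat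
        exact ⟨w', htrans huv hvw, hw⟩
  refine ⟨fun w => Theta r (Finset.Iic (e w)), ?_, ?_, ?_⟩
  · -- Φ w0 holds at u0
    rw [sat_Theta]
    intro j
    rw [Finset.mem_Iic]
    have hew0 : e w0 = ⟨0, hpos⟩ := by
      have h1 : e w0 ≤ e (e.symm ⟨0, hpos⟩) := e.le_iff_le.mpr (hw0 _)
      exact le_antisymm (by simpa using h1) (by simp [Fin.le_def])
    rw [hew0]
    constructor
    · intro hb
      by_contra hle
      have hj0 : 0 < j.val := by
        rcases Nat.eq_zero_or_pos j.val with h | h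
        · exact absurd (by simp [Fin.le_def, h]) hle
        · exact h
      exact (hr.1 j).2 hj0 hb
    · intro hle
      have : j = ⟨0, hpos⟩ := Fin.ext (Nat.le_zero.mp (by simpa [Fin.le_def] using hle))
      exact this ▸ hbox0
  · -- condition 2
    intro u hu w hw w'
    rw [sat_Theta] at hw
    simp only [Finset.mem_Iic] at hw
    rw [sat_dia]
    constructor
    · rintro ⟨v, huv, hv⟩
      rw [sat_Theta] at hv
      simp only [Finset.mem_Iic] at hv
      have hbu : Satisfies N u (Formula.box (r (e w))) := (hw (e w)).mpr le_rfl
      have hbv : Satisfies N v (Formula.box (r (e w))) := hpers u v huv _ hbu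
      have : e w ≤ e w' := (hv (e w)).mp hbv
      exact e.le_iff_le.mp this
    · intro hww'
      have hle : (e w).val ≤ (e w').val := e.le_iff_le.mpr hww'
      obtain ⟨v, huv, hv⟩ := hreach (e w').val (e w').isLt u hu (e w) hle
        (by intro j; rw [hw j])
      refine ⟨v, huv, ?_⟩
      rw [sat_Theta]
      intro j
      rw [Finset.mem_Iic, hv j]
  · -- condition 3: uniqueness
    intro u hu
    obtain ⟨m, hm⟩ := hpat u hu
    refine ⟨e.symm m, ?_, ?_⟩
    · show Satisfies N u (Theta r (Finset.Iic (e (e.symm m))))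
      rw [sat_Theta]
      intro j
      rw [Finset.mem_Iic, e.apply_symm_apply]
      exact hm j
    · intro w'' hw''
      have hw'' : Satisfies N u (Theta r (Finset.Iic (e w''))) := hw''
      rw [sat_Theta] at hw''
      simp only [Finset.mem_Iic] at hw''
      have h1 : e w'' ≤ m := (hm _).mp ((hw'' (e w'')).mpr le_rfl)
      have h2 : m ≤ e w'' := (hw'' m).mp ((hm m).mpr le_rfl)
      have : e w'' = m := le_antisymm h1 h2
      rw [← this, e.symm_apply_apply]

end GrzPaper
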